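/- Let f(x) = |x|²/4 on ℝⁿ. For every smooth vector field V : ℝⁿ → ℝⁿ one has the pointwise identity ℒ(div_f* V) = div_f*(ℒV + (1/2)·V), where ℒ acts entrywise on the symmetric-matrix-valued map div_f* V; and for every smooth symmetric-matrix-valued map h : ℝⁿ → Symₙ(ℝ) one has div_f(ℒh) = (ℒ + 1/2)(div_f h), where ℒ acts entrywise on h and componentwise on div_f h. -/

import Mathlib

open MeasureTheory Real

noncomputable section

/-- Euclidean space `ℝⁿ`. -/
abbrev En (n : ℕ) := EuclideanSpace ℝ (Fin n)

variable {n : ℕ}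

/-- Partial derivative `∂_i u` in the `i`-th coordinate direction. -/
def pd (i : Fin n) (u : En n → ℝ) (x : En n) : ℝ :=
  fderiv ℝ u x (EuclideanSpace.single i 1)

/-- Euclidean Laplacian `Δu = Σ_i ∂_i∂_i u`. -/
def lap (u : En n → ℝ) (x : En n) : ℝ := ∑ i, pd i (pd i u) x

/-- The drift Laplacian `ℒu = Δu − ⟨x/2, ∇u⟩` for the potential `f(x) = |x|²/4`. -/
def driftLap (u : En n → ℝ) (x : En n) : ℝ :=
  lap u x - ∑ i, (x i / 2) * pd i u x

/-- The drift Laplacian acting componentwise on vector fields. -/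
def driftLapV (Y : En n → Fin n → ℝ) (x : En n) (i : Fin n) : ℝ :=
  driftLap (fun y => Y y i) x

/-- The gradient `∇u` as a vector field. -/
def gradV (u : En n → ℝ) (x : En n) (i : Fin n) : ℝ := pd i u x

/-- The weighted divergence `div_f Y = div Y − ⟨Y, x/2⟩` for `f(x) = |x|²/4`. -/
def divf (Y : En n → Fin n → ℝ) (x : En n) : ℝ :=
  ∑ i, (pd i (fun y => Y y i) x - Y x i * (x i / 2))

/-- `div_f* Y`, the symmetric 2-tensor `(div_f* Y)_{ij} = −(∂_i Y_j + ∂_j Y_i)/2`. -/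
def divfStar (Y : En n → Fin n → ℝ) (x : En n) (i j : Fin n) : ℝ :=
  -(pd i (fun y => Y y j) x + pd j (fun y => Y y i) x) / 2

/-- The weighted divergence of a matrix-valued map:
`(div_f h)_i = Σ_j (∂_j h_{ij} − (x_j/2) h_{ij})`. -/
def divfT (h : En n → Fin n → Fin n → ℝ) (x : En n) (i : Fin n) : ℝ :=
  ∑ j, (pd j (fun y => h y i j) x - (x j / 2) * h x i j)

/-- The operator `𝒫 = div_f ∘ div_f*` on vector fields. -/
def Pop (Y : En n → Fin n → ℝ) : En n → Fin n → ℝ := divfT (divfStar Y)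

/-- The Hessian matrix `(Hess u)_{ij} = ∂_i ∂_j u`. -/
def hess (u : En n → ℝ) (x : En n) (i j : Fin n) : ℝ := pd i (pd j u) x

/-- The Gaussian weight `e^{-f(x)} = e^{-|x|²/4}`. -/
def gw (x : En n) : ℝ := Real.exp (-(‖x‖ ^ 2 / 4))

section helpers
variable {u v : En n → ℝ} {x : En n} {i j k : Fin n}

lemma contDiff_pd (hu : ContDiff ℝ (⊤ : ℕ∞) u) (i : Fin n) : ContDiff ℝ (⊤ : ℕ∞) (pd i u) := by
  have h1 : ContDiff ℝ (⊤ : ℕ∞) (fun x => fderiv ℝ u x) := hu.fderiv_right (by simp)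
  exact (ContinuousLinearMap.apply ℝ ℝ (EuclideanSpace.single i 1)).contDiff.comp h1

lemma pd_add (hu : DifferentiableAt ℝ u x) (hv : DifferentiableAt ℝ v x) :
    pd i (fun y => u y + v y) x = pd i u x + pd i v x := by
  unfold pd; rw [fderiv_fun_add hu hv]; simp

lemma pd_sub (hu : DifferentiableAt ℝ u x) (hv : DifferentiableAt ℝ v x) :
    pd i (fun y => u y - v y) x = pd i u x - pd i v x := by
  unfold pd; rw [fderiv_fun_sub hu hv]; simp

lemma pd_neg : pd i (fun y => -u y) x = -pd i u x := by
  unfold pd; rw [fderiv_fun_neg]; simp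

lemma pd_const_mul (c : ℝ) (hu : DifferentiableAt ℝ u x) :
    pd i (fun y => c * u y) x = c * pd i u x := by
  unfold pd; rw [fderiv_const_mul hu]; simp

lemma pd_div_const (c : ℝ) (hu : DifferentiableAt ℝ u x) :
    pd i (fun y => u y / c) x = pd i u x / c := by
  have : (fun y => u y / c) = fun y => c⁻¹ * u y := by funext y; rw [div_eq_inv_mul]
  rw [this, pd_const_mul _ hu, div_eq_inv_mul]

lemma pd_mul (hu : DifferentiableAt ℝ u x) (hv : DifferentiableAt ℝ v x) :
    pd i (fun y => u y * v y) x = pd i u x * v x + u x * pd i v x := by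
  unfold pd; rw [fderiv_fun_mul hu hv]; simp; ring

lemma pd_sum {ι : Type*} (s : Finset ι) (f : ι → En n → ℝ)
    (hf : ∀ m ∈ s, DifferentiableAt ℝ (f m) x) :
    pd i (fun y => ∑ m ∈ s, f m y) x = ∑ m ∈ s, pd i (f m) x := by
  unfold pd; rw [fderiv_fun_sum hf]; simp

lemma pd_coord : pd i (fun y : En n => y j) x = if i = j then 1 else 0 := by
  have h : (fun y : En n => y j) = fun y => EuclideanSpace.proj (𝕜 := ℝ) j y := rfl
  unfold pd
  rw [h, (EuclideanSpace.proj (𝕜 := ℝ) j).fderiv]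
  simp [EuclideanSpace.single_apply, eq_comm]

lemma differentiableAt_coord : DifferentiableAt ℝ (fun y : En n => y j) x :=
  (EuclideanSpace.proj (𝕜 := ℝ) j).differentiableAt

lemma contDiff_coord (j : Fin n) : ContDiff ℝ (⊤ : ℕ∞) (fun y : En n => y j) :=
  (EuclideanSpace.proj (𝕜 := ℝ) j).contDiff

lemma differentiableAt_half_coord : DifferentiableAt ℝ (fun y : En n => y j / 2) x := by
  simp only [div_eq_inv_mul]
  exact differentiableAt_coord.const_mul _

lemma pd_comm (hu : ContDiff ℝ (⊤ : ℕ∞) u) : pd i (pd j u) x = pd j (pd i u) x := by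
  have hd : ∀ y, HasFDerivAt u (fderiv ℝ u y) y :=
    fun y => (hu.differentiable (by simp) y).hasFDerivAt
  have h2 : HasFDerivAt (fderiv ℝ u) (fderiv ℝ (fderiv ℝ u) x) x :=
    (((hu.fderiv_right (m := (⊤ : ℕ∞)) (by simp)).differentiable (by simp)) x).hasFDerivAt
  have key : ∀ a b : Fin n, pd a (pd b u) x
      = fderiv ℝ (fderiv ℝ u) x (EuclideanSpace.single a 1) (EuclideanSpace.single b 1) := by
    intro a b
    unfold pd
    rw [fderiv_clm_apply (((hu.fderiv_right (m := (⊤ : ℕ∞)) (by simp)).differentiable (by simp)) x)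
      (differentiableAt_const _)]
    simp
  rw [key i j, key j i]
  exact second_derivative_symmetric hd h2 _ _

lemma pd_half_coord (k j : Fin n) (x : En n) :
    pd k (fun y : En n => y j / 2) x = (if k = j then (1:ℝ) else 0) / 2 := by
  rw [pd_div_const _ differentiableAt_coord, pd_coord]

lemma contDiff_lap (hu : ContDiff ℝ (⊤ : ℕ∞) u) : ContDiff ℝ (⊤ : ℕ∞) (lap u) := by
  unfold lap; exact ContDiff.sum fun i _ => contDiff_pd (contDiff_pd hu i) i

lemma contDiff_driftLap (hu : ContDiff ℝ (⊤ : ℕ∞) u) : ContDiff ℝ (⊤ : ℕ∞) (driftLap u) := by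
  unfold driftLap
  exact (contDiff_lap hu).sub
    (ContDiff.sum fun i _ => ((contDiff_coord i).div_const 2).mul (contDiff_pd hu i))

lemma sum_ite_half (k : Fin n) (f : Fin n → ℝ) :
    (∑ j, (if k = j then (1:ℝ) else 0) / 2 * f j) = (1/2) * f k := by
  have h : ∀ j : Fin n, (if k = j then (1:ℝ) else 0) / 2 * f j
      = if k = j then (1/2) * f j else 0 := by
    intro j; split <;> norm_num
  rw [Finset.sum_congr rfl fun j _ => h j, Finset.sum_ite_eq]
  simp

/-- Key commutation: `∂_k ℒu = ℒ ∂_k u − ½ ∂_k u`. -/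
lemma pd_driftLap (hu : ContDiff ℝ (⊤ : ℕ∞) u) (k : Fin n) (x : En n) :
    pd k (driftLap u) x = driftLap (pd k u) x - (1/2) * pd k u x := by
  have hterm : ∀ j : Fin n, ContDiff ℝ (⊤ : ℕ∞) (fun y : En n => (y j / 2) * pd j u y) :=
    fun j => ((contDiff_coord j).div_const 2).mul (contDiff_pd hu j)
  have e1 : driftLap u = fun y => (∑ i, pd i (pd i u) y) - ∑ j, (y j / 2) * pd j u y := rfl
  have hlapd : DifferentiableAt ℝ (fun y : En n => ∑ i, pd i (pd i u) y) x :=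
    (ContDiff.sum (fun i _ => contDiff_pd (contDiff_pd hu i) i)).differentiable (by simp) x
  have hsumd : DifferentiableAt ℝ (fun y : En n => ∑ j, (y j / 2) * pd j u y) x :=
    (ContDiff.sum (fun j (_ : j ∈ Finset.univ) => hterm j)).differentiable (by simp) x
  rw [e1, pd_sub hlapd hsumd,
      pd_sum _ _ (fun m _ => (contDiff_pd (contDiff_pd hu m) m).differentiable (by simp) x),
      pd_sum _ _ (fun j _ => (hterm j).differentiable (by simp) x)]
  have swap : ∀ i : Fin n, pd k (pd i (pd i u)) x = pd i (pd i (pd k u)) x := by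
    intro i
    rw [pd_comm (contDiff_pd hu i)]
    congr 1
    funext y
    exact pd_comm hu
  have prod : ∀ j : Fin n, pd k (fun y : En n => (y j / 2) * pd j u y) x
      = (if k = j then (1:ℝ) else 0) / 2 * pd j u x + (x j / 2) * pd j (pd k u) x := by
    intro j
    rw [pd_mul differentiableAt_half_coord
        ((contDiff_pd hu j).differentiable (by simp) x),
      pd_half_coord, pd_comm hu]
  simp only [Finset.sum_congr rfl fun i (_ : i ∈ Finset.univ) => swap i,
    Finset.sum_congr rfl fun j (_ : j ∈ Finset.univ) => prod j]
  rw [Finset.sum_add_distrib, sum_ite_half]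
  unfold driftLap lap
  ring

lemma driftLap_add (hu : ContDiff ℝ (⊤ : ℕ∞) u) (hv : ContDiff ℝ (⊤ : ℕ∞) v) :
    driftLap (fun y => u y + v y) x = driftLap u x + driftLap v x := by
  have h1 : ∀ m : Fin n, pd m (fun y => u y + v y) = fun y => pd m u y + pd m v y :=
    fun m => funext fun y => pd_add (hu.differentiable (by simp) y) (hv.differentiable (by simp) y)
  unfold driftLap lap
  simp only [h1]
  have h2 : ∀ m : Fin n, pd m (fun y => pd m u y + pd m v y) x
      = pd m (pd m u) x + pd m (pd m v) x := fun m =>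
    pd_add ((contDiff_pd hu m).differentiable (by simp) x)
      ((contDiff_pd hv m).differentiable (by simp) x)
  simp only [h2, mul_add]
  rw [Finset.sum_add_distrib, Finset.sum_add_distrib]
  ring

lemma driftLap_const_mul (c : ℝ) (hu : ContDiff ℝ (⊤ : ℕ∞) u) :
    driftLap (fun y => c * u y) x = c * driftLap u x := by
  have h1 : ∀ m : Fin n, pd m (fun y => c * u y) = fun y => c * pd m u y :=
    fun m => funext fun y => pd_const_mul c (hu.differentiable (by simp) y)
  unfold driftLap lap
  simp only [h1]
  have h2 : ∀ m : Fin n, pd m (fun y => c * pd m u y) x = c * pd m (pd m u) x := fun m =>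
    pd_const_mul c ((contDiff_pd hu m).differentiable (by simp) x)
  simp only [h2]
  rw [mul_sub, Finset.mul_sum, Finset.mul_sum]
  congr 1
  exact Finset.sum_congr rfl fun m _ => by ring

lemma driftLap_sub (hu : ContDiff ℝ (⊤ : ℕ∞) u) (hv : ContDiff ℝ (⊤ : ℕ∞) v) :
    driftLap (fun y => u y - v y) x = driftLap u x - driftLap v x := by
  have e : (fun y => u y - v y) = fun y => u y + (-1 : ℝ) * v y := by funext y; ring
  rw [e, driftLap_add hu (by exact (contDiff_const (c := (-1:ℝ))).mul hv),
    driftLap_const_mul (-1) hv]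
  ring

lemma driftLap_sum {ι : Type*} (s : Finset ι) (f : ι → En n → ℝ)
    (hf : ∀ m ∈ s, ContDiff ℝ (⊤ : ℕ∞) (f m)) {x : En n} :
    driftLap (fun y => ∑ m ∈ s, f m y) x = ∑ m ∈ s, driftLap (f m) x := by
  classical
  induction s using Finset.induction_on with
  | empty =>
    have h0 : ∀ m : Fin n, pd m (fun _ : En n => (0:ℝ)) = fun _ => 0 := by
      intro m; funext y; simp [pd]
    simp [driftLap, lap, h0]
  | insert a s' hne ih =>
    have h1 : (fun y => ∑ m ∈ insert a s', f m y)
        = fun y => f a y + ∑ m ∈ s', f m y := by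
      funext y; rw [Finset.sum_insert hne]
    rw [h1, driftLap_add (hf a (Finset.mem_insert_self a s'))
        (ContDiff.sum fun m hm => hf m (Finset.mem_insert_of_mem hm)),
      ih (fun m hm => hf m (Finset.mem_insert_of_mem hm)), Finset.sum_insert hne]

/-- Product rule: `ℒ(x_j/2 · g) = (x_j/2)ℒg + ∂_j g − (x_j/4)g`. -/
lemma driftLap_coord_mul (hg : ContDiff ℝ (⊤ : ℕ∞) u) (j : Fin n) (x : En n) :
    driftLap (fun y : En n => (y j / 2) * u y) x
      = (x j / 2) * driftLap u x + pd j u x - (x j / 4) * u x := by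
  have h1 : ∀ m : Fin n, pd m (fun y : En n => (y j / 2) * u y)
      = fun y => (if m = j then (1:ℝ) else 0) / 2 * u y + (y j / 2) * pd m u y := by
    intro m; funext y
    rw [pd_mul differentiableAt_half_coord (hg.differentiable (by simp) y),
      pd_half_coord]
  have h2 : ∀ m : Fin n, pd m (fun y : En n =>
        (if m = j then (1:ℝ) else 0) / 2 * u y + (y j / 2) * pd m u y) x
      = (if m = j then (1:ℝ) else 0) / 2 * pd m u x
        + ((if m = j then (1:ℝ) else 0) / 2 * pd m u x + (x j / 2) * pd m (pd m u) x) := by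
    intro m
    rw [pd_add (by exact (contDiff_const.mul hg).differentiable (by simp) x)
        (by exact (((contDiff_coord j).div_const 2).mul (contDiff_pd hg m)).differentiable (by simp) x),
      pd_const_mul _ (hg.differentiable (by simp) x),
      pd_mul differentiableAt_half_coord
        ((contDiff_pd hg m).differentiable (by simp) x), pd_half_coord]
  unfold driftLap lap
  simp only [h1, h2]
  have hA : ∀ m : Fin n, ((if m = j then (1:ℝ) else 0) / 2 * pd m u x
      + ((if m = j then (1:ℝ) else 0) / 2 * pd m u x + (x j / 2) * pd m (pd m u) x))
      = (if m = j then pd m u x else 0) + (x j / 2) * pd m (pd m u) x := by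
    intro m; split <;> ring
  have hB : ∀ m : Fin n, (x m / 2) * ((if m = j then (1:ℝ) else 0) / 2 * u x
        + (x j / 2) * pd m u x)
      = (if m = j then (x m / 4) * u x else 0) + (x j / 2) * ((x m / 2) * pd m u x) := by
    intro m; split <;> ring
  simp only [hA, hB]
  rw [Finset.sum_add_distrib, Finset.sum_add_distrib, Finset.sum_ite_eq', Finset.sum_ite_eq']
  simp only [Finset.mem_univ, if_true, ← Finset.mul_sum]
  ring

end helpers

/-- Commutation of `ℒ` with `div_f*` and `div_f` on the Gaussian soliton:
`ℒ(div_f* V) = div_f*(ℒV + (1/2)V)` for smooth vector fields `V`, and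
`div_f(ℒh) = (ℒ + 1/2)(div_f h)` for smooth symmetric 2-tensors `h`. -/

theorem stmt_2 (n : ℕ) :
    (∀ V : En n → Fin n → ℝ, ContDiff ℝ (⊤ : ℕ∞) V → ∀ (x : En n) (i j : Fin n),
      driftLap (fun y => divfStar V y i j) x
        = divfStar (fun y k => driftLapV V y k + (1/2) * V y k) x i j) ∧
    (∀ h : En n → Fin n → Fin n → ℝ, ContDiff ℝ (⊤ : ℕ∞) h → (∀ x i j, h x i j = h x j i) →
      ∀ (x : En n) (i : Fin n),
      divfT (fun y a b => driftLap (fun z => h z a b) y) x i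
        = driftLapV (divfT h) x i + (1/2) * divfT h x i) := by
  constructor
  · intro V hV x i j
    have hVc : ∀ k : Fin n, ContDiff ℝ (⊤ : ℕ∞) (fun y => V y k) := fun k => contDiff_pi.mp hV k
    have hA : ContDiff ℝ (⊤ : ℕ∞) (pd i (fun y => V y j)) := contDiff_pd (hVc j) i
    have hB : ContDiff ℝ (⊤ : ℕ∞) (pd j (fun y => V y i)) := contDiff_pd (hVc i) j
    have eL : (fun y => divfStar V y i j)
        = fun y => (-(1/2) : ℝ) * (pd i (fun z => V z j) y + pd j (fun z => V z i) y) := by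
      funext y; simp only [divfStar]; ring
    rw [eL, driftLap_const_mul _ (hA.add hB), driftLap_add hA hB]
    have eR1 : pd i (fun y => driftLapV V y j + (1/2) * V y j) x
        = driftLap (pd i (fun z => V z j)) x - (1/2) * pd i (fun z => V z j) x
          + (1/2) * pd i (fun z => V z j) x := by
      have : (fun y => driftLapV V y j) = driftLap (fun z => V z j) := rfl
      rw [show (fun y => driftLapV V y j + (1/2) * V y j)
            = fun y => driftLap (fun z => V z j) y + (1/2) * V y j from rfl,
        pd_add ((contDiff_driftLap (hVc j)).differentiable (by simp) x)
          ((contDiff_const.mul (hVc j)).differentiable (by simp) x),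
        pd_const_mul _ ((hVc j).differentiable (by simp) x),
        pd_driftLap (hVc j) i x]
    have eR2 : pd j (fun y => driftLapV V y i + (1/2) * V y i) x
        = driftLap (pd j (fun z => V z i)) x - (1/2) * pd j (fun z => V z i) x
          + (1/2) * pd j (fun z => V z i) x := by
      rw [show (fun y => driftLapV V y i + (1/2) * V y i)
            = fun y => driftLap (fun z => V z i) y + (1/2) * V y i from rfl,
        pd_add ((contDiff_driftLap (hVc i)).differentiable (by simp) x)
          ((contDiff_const.mul (hVc i)).differentiable (by simp) x),
        pd_const_mul _ ((hVc i).differentiable (by simp) x),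
        pd_driftLap (hVc i) j x]
    show _ = -(pd i (fun y => driftLapV V y j + (1/2) * V y j) x
        + pd j (fun y => driftLapV V y i + (1/2) * V y i) x) / 2
    rw [eR1, eR2]
    ring
  · intro h hh _hsym x i
    have hg : ∀ a b : Fin n, ContDiff ℝ (⊤ : ℕ∞) (fun y => h y a b) :=
      fun a b => contDiff_pi.mp (contDiff_pi.mp hh a) b
    have hgd : ∀ j : Fin n, ContDiff ℝ (⊤ : ℕ∞) (pd j (fun z => h z i j)) :=
      fun j => contDiff_pd (hg i j) j
    have hcm : ∀ j : Fin n, ContDiff ℝ (⊤ : ℕ∞) (fun y : En n => (y j / 2) * h y i j) :=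
      fun j => ((contDiff_coord j).div_const 2).mul (hg i j)
    have eL : divfT (fun y a b => driftLap (fun z => h z a b) y) x i
        = ∑ j, (pd j (driftLap (fun z => h z i j)) x
            - (x j / 2) * driftLap (fun z => h z i j) x) := rfl
    rw [eL]
    have eLj : ∀ j : Fin n, pd j (driftLap (fun z => h z i j)) x
        = driftLap (pd j (fun z => h z i j)) x - (1/2) * pd j (fun z => h z i j) x :=
      fun j => pd_driftLap (hg i j) j x
    have eR0 : (fun y => divfT h y i)
        = fun y => ∑ j, (pd j (fun z => h z i j) y - (y j / 2) * h y i j) := rfl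
    have eR1 : driftLapV (divfT h) x i
        = ∑ j, (driftLap (pd j (fun z => h z i j)) x
            - ((x j / 2) * driftLap (fun z => h z i j) x + pd j (fun z => h z i j) x
              - (x j / 4) * h x i j)) := by
      show driftLap (fun y => divfT h y i) x = _
      rw [eR0, driftLap_sum _ _ (fun j _ => (hgd j).sub (hcm j))]
      refine Finset.sum_congr rfl fun j _ => ?_
      rw [driftLap_sub (hgd j) (hcm j), driftLap_coord_mul (hg i j) j x]
    rw [eR1]
    have eR2 : divfT h x i = ∑ j, (pd j (fun z => h z i j) x - (x j / 2) * h x i j) := rfl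
    rw [eR2, Finset.mul_sum, ← Finset.sum_add_distrib]
    refine Finset.sum_congr rfl fun j _ => ?_
    rw [eLj j]
    ring
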